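/- Let A be a minimally non-totally unimodular square matrix and let x be a column vector of the same height. The matrix obtained from A by appending the column x is totally equimodular if and only if x is the zero vector or x = ±A^j for some column A^j of A. -/

import Mathlib

/-- All the nonzero maximal (m×m) subdeterminants of `A` have the same absolute value. -/
def Equimodular {m n : ℕ} (A : Matrix (Fin m) (Fin n) ℚ) : Prop :=
  ∃ d : ℚ, ∀ g : Fin m ↪ Fin n,
    (A.submatrix id g).det ≠ 0 → |(A.submatrix id g).det| = d

/-- Every set of linearly independent rows of `A` forms an equimodular matrix. -/
def TotallyEquimodular {m n : ℕ} (A : Matrix (Fin m) (Fin n) ℚ) : Prop :=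
  ∀ (k : ℕ) (e : Fin k ↪ Fin m),
    LinearIndependent ℚ (fun i => A (e i)) → Equimodular (A.submatrix e id)

/-- `A` is not totally unimodular but every proper submatrix of `A` is. -/
def MinNonTU {m n : ℕ} (A : Matrix (Fin m) (Fin n) ℚ) : Prop :=
  ¬ A.IsTotallyUnimodular ∧
    ∀ (k l : ℕ) (e : Fin k ↪ Fin m) (f : Fin l ↪ Fin n), k < m ∨ l < n →
      (A.submatrix e f).IsTotallyUnimodular

/-!
A square matrix `A` whose proper minors lie in `{0, ±1}` but whose determinant does not has all
its cofactors equal to `±1` (Camion): pivoting on a nonzero entry outside a given row and column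
produces a smaller matrix of the same kind, so induction applies.

Since `A` is nonsingular, write `x = A y`. Among the maximal minors of `[A | x]` are `det A` and,
by Cramer's rule, `y j * det A`; equimodularity makes every `y j` lie in `{0, ±1}`. If two entries
`y j₁`, `y j₂` were nonzero, replace column `j₁` of `A` by `x` to get a nonsingular `W`. The
cofactors of `W` in column `j₂` are `y j₁ * c j₂ i - y j₂ * c j₁ i ∈ {0, ±2}`, where `c` is the
adjugate of `A`; they are maximal minors of `[A | x]` with row `i` deleted, where a cofactor of
`A` already gives the value `±1`, so they all vanish, contradicting `det W ≠ 0`.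

Conversely, if `x = ε • A^j` with `ε ∈ {0, ±1}`, every maximal minor of a row submatrix of
`[A | x]` is `0` or `±` a minor of `A`: this is `0, ±1` for a proper set of rows, and
`0, ±det A` for all rows.
-/

open Function

section SignRange

variable {R : Type*} [CommRing R]

lemma mul_mem_range_signType_cast {a b : R} (ha : a ∈ Set.range SignType.cast)
    (hb : b ∈ Set.range SignType.cast) : a * b ∈ Set.range SignType.cast := by
  obtain ⟨s, rfl⟩ := ha
  obtain ⟨t, rfl⟩ := hb
  exact ⟨s * t, SignType.coe_mul s t⟩

lemma neg_one_pow_mem_range_signType_cast (k : ℕ) :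
    (-1 : R) ^ k ∈ Set.range SignType.cast :=
  ⟨(-1) ^ k, by simp⟩

lemma mul_self_eq_one_of_mem_range_signType_cast {a : R} (ha : a ∈ Set.range SignType.cast)
    (h0 : a ≠ 0) : a * a = 1 := by
  obtain ⟨s, rfl⟩ := ha
  cases s <;> simp_all

lemma eq_one_or_eq_neg_one_of_mem_range_signType_cast {a : R}
    (ha : a ∈ Set.range SignType.cast) (h0 : a ≠ 0) : a = 1 ∨ a = -1 := by
  obtain ⟨s, rfl⟩ := ha
  cases s <;> simp_all

lemma mul_mem_range_signType_cast_iff {u a : R} (hu : u ∈ Set.range SignType.cast)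
    (huu : u * u = 1) : u * a ∈ Set.range SignType.cast ↔ a ∈ Set.range SignType.cast := by
  refine ⟨fun h => ?_, mul_mem_range_signType_cast hu⟩
  simpa [← mul_assoc, huu] using mul_mem_range_signType_cast hu h

end SignRange

section OrderedSignRange

variable {R : Type*} [CommRing R] [LinearOrder R] [IsStrictOrderedRing R]

lemma abs_eq_one_of_mem_range_signType_cast {a : R} (ha : a ∈ Set.range SignType.cast)
    (h0 : a ≠ 0) : |a| = 1 := by
  obtain ⟨s, rfl⟩ := ha
  cases s <;> simp_all

lemma mem_range_signType_cast_of_abs_eq_one {a : R} (ha : |a| = 1) :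
    a ∈ Set.range SignType.cast := by
  rcases abs_eq (zero_le_one' R) |>.1 ha with rfl | rfl
  exacts [⟨1, SignType.coe_one⟩, ⟨-1, by simp⟩]

end OrderedSignRange

namespace Matrix

section Submatrix

variable {R : Type*} [CommRing R] {m n ι : Type*}

lemma det_submatrix_perm_mem_range_iff [Fintype n] [DecidableEq n] (A : Matrix n n R)
    (σ τ : Equiv.Perm n) :
    (A.submatrix σ τ).det ∈ Set.range SignType.cast ↔ A.det ∈ Set.range SignType.cast := by
  have hsign : ∀ u : ℤˣ, ((u : ℤ) : R) ∈ Set.range SignType.cast := by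
    intro u
    rcases Int.units_eq_one_or u with rfl | rfl
    exacts [⟨1, by simp⟩, ⟨-1, by simp⟩]
  have hsq : ∀ u : ℤˣ, ((u : ℤ) : R) * ((u : ℤ) : R) = 1 := fun u => by
    rw [← Int.cast_mul, ← Units.val_mul, Int.units_mul_self, Units.val_one, Int.cast_one]
  rw [show A.submatrix σ τ = (A.submatrix σ id).submatrix id τ from rfl, det_permute',
    det_permute, mul_mem_range_signType_cast_iff (hsign _) (hsq _),
    mul_mem_range_signType_cast_iff (hsign _) (hsq _)]

lemma det_submatrix_eq_zero_of_not_injective_right [Fintype ι] [DecidableEq ι]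
    (A : Matrix m n R) (e : ι → m) {g : ι → n} (hg : ¬ Injective g) :
    (A.submatrix e g).det = 0 := by
  obtain ⟨p, q, hpq, hne⟩ := not_injective_iff.1 hg
  exact det_zero_of_column_eq hne fun r => by simp [hpq]

lemma abs_det_submatrix_of_injective {S : Type*} [CommRing S] [LinearOrder S]
    [IsStrictOrderedRing S] [Fintype n] [DecidableEq n] (A : Matrix n n S) {f g : n → n}
    (hf : Injective f) (hg : Injective g) : |(A.submatrix f g).det| = |A.det| :=
  abs_det_submatrix_equiv_equiv (Equiv.ofBijective f hf.bijective_of_finite)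
    (Equiv.ofBijective g hg.bijective_of_finite) A

end Submatrix

section Pivot

variable {K : Type*} [Field K]

def pivotAt {m n : ℕ} (M : Matrix (Fin (m + 1)) (Fin (n + 1)) K) (r : Fin (m + 1))
    (s : Fin (n + 1)) : Matrix (Fin m) (Fin n) K :=
  of fun i j =>
    M (r.succAbove i) (s.succAbove j) - M (r.succAbove i) s * M r (s.succAbove j) / M r s

lemma det_eq_mul_det_pivotAt {m : ℕ} (M : Matrix (Fin (m + 1)) (Fin (m + 1)) K)
    {r s : Fin (m + 1)} (h : M r s ≠ 0) :
    M.det = (-1) ^ (r + s : ℕ) * M r s * (M.pivotAt r s).det := by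
  let c : Fin (m + 1) → K := fun i => if i = r then 0 else -(M i s / M r s)
  let X : Matrix (Fin (m + 1)) (Fin (m + 1)) K := of fun i j => M i j + c i * M r j
  have hX : X.det = M.det :=
    det_eq_of_forall_row_eq_smul_add_const c r (by simp [c]) fun _ _ => rfl
  have hXs : ∀ i ≠ r, X i s = 0 := fun i hi => by
    simp only [X, c, of_apply, if_neg hi]
    field_simp
    ring
  have hXsub : X.submatrix r.succAbove s.succAbove = M.pivotAt r s := by
    ext i j
    simp only [X, c, pivotAt, submatrix_apply, of_apply, if_neg (Fin.succAbove_ne r i)]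
    ring
  rw [← hX, det_succ_column X s, Finset.sum_eq_single r (fun i _ hi => by rw [hXs i hi]; ring)
    (by simp), hXsub]
  simp [X, c]

lemma pivotAt_submatrix {m n k l : ℕ} (M : Matrix (Fin (m + 1)) (Fin (n + 1)) K)
    (r : Fin (m + 1)) (s : Fin (n + 1)) (f : Fin k → Fin m) (g : Fin l → Fin n) :
    (M.pivotAt r s).submatrix f g =
      (M.submatrix (Fin.cons r (r.succAbove ∘ f)) (Fin.cons s (s.succAbove ∘ g))).pivotAt 0 0 := by
  ext i j
  simp [pivotAt]

lemma pivotAt_succ_submatrix_succ {m n : ℕ} (M : Matrix (Fin (m + 2)) (Fin (n + 2)) K)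
    (r : Fin (m + 1)) (s : Fin (n + 1)) :
    (M.pivotAt r.succ s.succ).submatrix Fin.succ Fin.succ =
      (M.submatrix Fin.succ Fin.succ).pivotAt r s := by
  ext i j
  simp [pivotAt, Fin.succ_succAbove_succ]

end Pivot

section ProperMinors

variable {R : Type*} [CommRing R]

/-- The index maps need not be injective: repeated rows or columns give determinant `0`. -/
def HasUnimodularProperMinors {n : ℕ} (A : Matrix (Fin n) (Fin n) R) : Prop :=
  ∀ k < n, ∀ f g : Fin k → Fin n, (A.submatrix f g).det ∈ Set.range SignType.cast

lemma HasUnimodularProperMinors.apply_mem {n : ℕ} {A : Matrix (Fin n) (Fin n) R}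
    (hA : A.HasUnimodularProperMinors) (hn : 1 < n) (i j : Fin n) :
    A i j ∈ Set.range SignType.cast := by
  have h := hA 1 hn ![i] ![j]
  rwa [det_fin_one] at h

lemma HasUnimodularProperMinors.submatrix_perm {n : ℕ} {A : Matrix (Fin n) (Fin n) R}
    (hA : A.HasUnimodularProperMinors) (σ τ : Equiv.Perm (Fin n)) :
    (A.submatrix σ τ).HasUnimodularProperMinors :=
  fun k hk f g => by simpa only [submatrix_submatrix] using hA k hk (σ ∘ f) (τ ∘ g)

variable {K : Type*} [Field K]

lemma HasUnimodularProperMinors.pivotAt {m : ℕ} {A : Matrix (Fin (m + 2)) (Fin (m + 2)) K}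
    (hA : A.HasUnimodularProperMinors) {r s : Fin (m + 2)} (h : A r s ≠ 0) :
    (A.pivotAt r s).HasUnimodularProperMinors := by
  intro k hk f g
  have hrs := hA.apply_mem (by omega) r s
  have hminor :=
    hA (k + 1) (by omega) (Fin.cons r (r.succAbove ∘ f)) (Fin.cons s (s.succAbove ∘ g))
  rw [det_eq_mul_det_pivotAt _ (r := 0) (s := 0) (by simpa using h), ← pivotAt_submatrix]
    at hminor
  simpa [mul_mem_range_signType_cast_iff hrs
    (mul_self_eq_one_of_mem_range_signType_cast hrs h)] using hminor

lemma det_pivotAt_notMem_range {m : ℕ} {A : Matrix (Fin (m + 1)) (Fin (m + 1)) K}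
    (hdet : A.det ∉ Set.range SignType.cast) {r s : Fin (m + 1)}
    (hrs : A r s ∈ Set.range SignType.cast) (h : A r s ≠ 0) :
    (A.pivotAt r s).det ∉ Set.range SignType.cast := fun hP =>
  hdet <| det_eq_mul_det_pivotAt A h ▸ mul_mem_range_signType_cast
    (mul_mem_range_signType_cast (neg_one_pow_mem_range_signType_cast _) hrs) hP

theorem HasUnimodularProperMinors.det_submatrix_succ_succ_ne_zero {m : ℕ}
    {A : Matrix (Fin (m + 1)) (Fin (m + 1)) K} (hA : A.HasUnimodularProperMinors)
    (hdet : A.det ∉ Set.range SignType.cast) : (A.submatrix Fin.succ Fin.succ).det ≠ 0 := by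
  induction m with
  | zero => simp
  | succ m ih =>
    obtain ⟨r, s, hrs⟩ : ∃ r s : Fin (m + 1), A r.succ s.succ ≠ 0 := by
      by_contra! h0
      -- otherwise expanding along column `1` writes `det A` as a product of proper minors
      have hexp : A.det = (-1) ^ 1 * A 0 1 * (A.submatrix (0 : Fin (m + 2)).succAbove
          (1 : Fin (m + 2)).succAbove).det := by
        rw [det_succ_column A 1, Fin.sum_univ_succ, Finset.sum_eq_zero fun i _ => by
          simp [show A i.succ 1 = 0 from h0 i 0]]
        simp
      exact hdet (hexp ▸ mul_mem_range_signType_cast (mul_mem_range_signType_cast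
        (neg_one_pow_mem_range_signType_cast _) (hA.apply_mem (by omega) _ _))
        (hA (m + 1) (by omega) _ _))
    have hP := ih (hA.pivotAt hrs)
      (det_pivotAt_notMem_range hdet (hA.apply_mem (by omega) _ _) hrs)
    rw [det_eq_mul_det_pivotAt _ (show (A.submatrix Fin.succ Fin.succ) r s ≠ 0 from hrs),
      ← pivotAt_succ_submatrix_succ]
    exact mul_ne_zero (mul_ne_zero (pow_ne_zero _ (neg_ne_zero.2 one_ne_zero)) hrs) hP

theorem HasUnimodularProperMinors.det_submatrix_succAbove_ne_zero {m : ℕ}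
    {A : Matrix (Fin (m + 1)) (Fin (m + 1)) K} (hA : A.HasUnimodularProperMinors)
    (hdet : A.det ∉ Set.range SignType.cast) (i j : Fin (m + 1)) :
    (A.submatrix i.succAbove j.succAbove).det ≠ 0 := by
  have h := (hA.submatrix_perm i.cycleRange.symm j.cycleRange.symm).det_submatrix_succ_succ_ne_zero
    (by rwa [det_submatrix_perm_mem_range_iff])
  rwa [submatrix_submatrix, show (i.cycleRange.symm ∘ Fin.succ) = i.succAbove by ext; simp,
    show (j.cycleRange.symm ∘ Fin.succ) = j.succAbove by ext; simp] at h

theorem HasUnimodularProperMinors.adjugate_apply_eq_one_or_eq_neg_one {m : ℕ}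
    {A : Matrix (Fin (m + 1)) (Fin (m + 1)) K} (hA : A.HasUnimodularProperMinors)
    (hdet : A.det ∉ Set.range SignType.cast) (i j : Fin (m + 1)) :
    A.adjugate i j = 1 ∨ A.adjugate i j = -1 := by
  rw [adjugate_fin_succ_eq_det_submatrix]
  refine eq_one_or_eq_neg_one_of_mem_range_signType_cast
    (mul_mem_range_signType_cast (neg_one_pow_mem_range_signType_cast _) (hA m (by omega) _ _))
    (mul_ne_zero (pow_ne_zero _ (neg_ne_zero.2 one_ne_zero))
      (hA.det_submatrix_succAbove_ne_zero hdet j i))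

end ProperMinors

section Cramer

variable {R : Type*} [CommRing R] {n : Type*} [Fintype n] [DecidableEq n]

lemma det_updateCol_mulVec (A : Matrix n n R) (y : n → R) (j : n) :
    (A.updateCol j (A *ᵥ y)).det = A.det * y j := by
  rw [← cramer_apply, cramer_eq_adjugate_mulVec, mulVec_mulVec, adjugate_mul, smul_mulVec,
    one_mulVec, Pi.smul_apply, smul_eq_mul]

lemma adjugate_apply_eq_det_updateCol (A : Matrix n n R) (i j : n) :
    A.adjugate i j = (A.updateCol i (Pi.single j 1)).det := by
  rw [← cramer_apply, cramer_eq_adjugate_mulVec]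
  simp

lemma adjugate_updateCol_mulVec_apply (A : Matrix n n R) (y : n → R) {j₁ j₂ : n}
    (h : j₁ ≠ j₂) (i : n) :
    (A.updateCol j₁ (A *ᵥ y)).adjugate j₂ i = y j₁ * A.adjugate j₂ i - y j₂ * A.adjugate j₁ i := by
  set A' := A.updateCol j₂ (Pi.single i 1)
  have hsplit : A *ᵥ y = A' *ᵥ update y j₂ 0 + y j₂ • fun r => A r j₂ := by
    ext r
    simp only [A', mulVec, dotProduct, Pi.add_apply, Pi.smul_apply, smul_eq_mul, updateCol_apply,
      update_apply]
    rw [← Finset.add_sum_erase _ _ (Finset.mem_univ j₂),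
      ← Finset.add_sum_erase _ _ (Finset.mem_univ j₂)]
    simp only [if_true, mul_zero, zero_add]
    rw [add_comm, mul_comm (A r j₂)]
    congr 1
    exact Finset.sum_congr rfl fun k hk => by simp [Finset.ne_of_mem_erase hk]
  have hswap : A'.updateCol j₁ (fun r => A r j₂) =
      (A.updateCol j₁ (Pi.single i 1)).submatrix id (Equiv.swap j₁ j₂) := by
    ext r c
    simp only [A', updateCol_apply, submatrix_apply, id, Equiv.swap_apply_def]
    split_ifs <;> simp_all
  rw [adjugate_apply_eq_det_updateCol, updateCol_comm _ h, ← cramer_apply, hsplit,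
    map_add, map_smul, cramer_eq_adjugate_mulVec A', mulVec_mulVec, adjugate_mul, Pi.add_apply,
    Pi.smul_apply, cramer_apply, hswap, det_permute', Equiv.Perm.sign_swap h,
    adjugate_apply_eq_det_updateCol, adjugate_apply_eq_det_updateCol]
  simp [smul_mulVec, update_of_ne h]
  ring

end Cramer

section SnocCol

variable {m n : ℕ} {α : Type*}

def snocCol (A : Matrix (Fin m) (Fin n) α) (x : Fin m → α) : Matrix (Fin m) (Fin (n + 1)) α :=
  of fun i => Fin.snoc (A i) (x i)

lemma snocCol_submatrix_castSucc (A : Matrix (Fin m) (Fin n) α) (x : Fin m → α) :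
    (A.snocCol x).submatrix id Fin.castSucc = A := by
  ext i j
  simp [snocCol]

lemma snocCol_submatrix_update_castSucc (A : Matrix (Fin m) (Fin n) α) (x : Fin m → α)
    (j : Fin n) :
    (A.snocCol x).submatrix id (update Fin.castSucc j (Fin.last n)) = A.updateCol j x := by
  ext i c
  by_cases hc : c = j <;> simp [snocCol, hc]

lemma injective_update_castSucc_last (j : Fin n) :
    Injective (update (Fin.castSucc : Fin n → Fin (n + 1)) j (Fin.last n)) := by
  intro a b hab
  by_cases ha : a = j <;> by_cases hb : b = j <;>
    simp_all [Fin.castSucc_ne_last, (Fin.castSucc_ne_last _).symm]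

lemma det_submatrix_snocCol_smul_col {R : Type*} [CommRing R] (A : Matrix (Fin m) (Fin n) R)
    (j : Fin n) (ε : R) {k : ℕ} (e : Fin k → Fin m) (g : Fin k → Fin (n + 1)) :
    ((A.snocCol fun i => ε * A i j).submatrix e g).det =
      (A.submatrix e (Fin.lastCases j id ∘ g)).det * ∏ q, Fin.lastCases ε (fun _ => 1) (g q) := by
  rw [← det_diagonal, ← det_mul]
  congr 1
  ext p q
  rcases Fin.eq_castSucc_or_eq_last (g q) with ⟨c, hc⟩ | hc <;>
    simp [snocCol, mul_diagonal, hc, mul_comm]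

lemma linearIndependent_snocCol_rows {K : Type*} [Field K] {k : ℕ}
    {A : Matrix (Fin n) (Fin n) K} (hA : A.det ≠ 0) (x : Fin n → K) {e : Fin k → Fin n}
    (he : Injective e) : LinearIndependent K fun i => A.snocCol x (e i) := by
  have hrows : LinearIndependent K fun i => A (e i) :=
    (linearIndependent_rows_iff_isUnit.2 ((isUnit_iff_isUnit_det A).2 hA.isUnit)).comp e he
  refine LinearIndependent.of_comp (LinearMap.funLeft K K Fin.castSucc) ?_
  convert hrows using 1
  ext i j
  simp [snocCol, LinearMap.funLeft]

end SnocCol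

end Matrix

section Equimodular

open Matrix

lemma TotallyEquimodular.abs_det_submatrix_eq {m n k : ℕ} {B : Matrix (Fin m) (Fin n) ℚ}
    (hB : TotallyEquimodular B) {e : Fin k → Fin m} (he : Injective e)
    (hli : LinearIndependent ℚ fun i => B (e i)) {g₁ g₂ : Fin k → Fin n} (hg₁ : Injective g₁)
    (hg₂ : Injective g₂) (h₁ : (B.submatrix e g₁).det ≠ 0) (h₂ : (B.submatrix e g₂).det ≠ 0) :
    |(B.submatrix e g₁).det| = |(B.submatrix e g₂).det| := by
  obtain ⟨d, hd⟩ := hB k ⟨e, he⟩ hli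
  have hd' : ∀ g, Injective g → (B.submatrix e g).det ≠ 0 → |(B.submatrix e g).det| = d :=
    fun g hg => hd ⟨g, hg⟩
  rw [hd' g₁ hg₁ h₁, hd' g₂ hg₂ h₂]

theorem totallyEquimodular_snocCol_smul_col {n : ℕ} {A : Matrix (Fin n) (Fin n) ℚ}
    (hA : A.HasUnimodularProperMinors) (j : Fin n) {ε : ℚ} (hε : ε ∈ Set.range SignType.cast) :
    TotallyEquimodular (A.snocCol fun i => ε * A i j) := by
  intro k e _
  have hminor : ∀ g : Fin k ↪ Fin (n + 1), ∃ u ∈ Set.range SignType.cast,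
      (((A.snocCol fun i => ε * A i j).submatrix e id).submatrix id g).det =
        (A.submatrix e (Fin.lastCases j id ∘ g)).det * u := fun g =>
    ⟨_, Finset.prod_induction _ (· ∈ Set.range SignType.cast)
      (fun _ _ => mul_mem_range_signType_cast) ⟨1, SignType.coe_one⟩ fun q _ => by
        rcases Fin.eq_castSucc_or_eq_last (g q) with ⟨c, hc⟩ | hc
        · rw [hc, Fin.lastCases_castSucc]
          exact ⟨1, SignType.coe_one⟩
        · rwa [hc, Fin.lastCases_last],
      det_submatrix_snocCol_smul_col A j ε e g⟩
  rcases (show k ≤ n by simpa using Fintype.card_le_of_injective e e.injective).lt_or_eq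
    with hk | rfl
  · refine ⟨1, fun g hg => ?_⟩
    obtain ⟨u, hu, hdet⟩ := hminor g
    rw [hdet] at hg ⊢
    exact abs_eq_one_of_mem_range_signType_cast (mul_mem_range_signType_cast (hA k hk _ _) hu) hg
  · refine ⟨|A.det|, fun g hg => ?_⟩
    obtain ⟨u, hu, hdet⟩ := hminor g
    rw [hdet] at hg ⊢
    have hinj : Injective (Fin.lastCases j id ∘ g) := by
      by_contra h
      exact hg (by rw [det_submatrix_eq_zero_of_not_injective_right _ _ h, zero_mul])
    rw [abs_mul, abs_det_submatrix_of_injective A e.injective hinj,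
      abs_eq_one_of_mem_range_signType_cast hu (right_ne_zero_of_mul hg), mul_one]

theorem TotallyEquimodular.mem_range_of_snocCol_mulVec {n : ℕ} {A : Matrix (Fin n) (Fin n) ℚ}
    (hA : A.det ≠ 0) {y : Fin n → ℚ} (hTE : TotallyEquimodular (A.snocCol (A *ᵥ y)))
    (j : Fin n) : y j ∈ Set.range SignType.cast := by
  by_cases hy : y j = 0
  · exact ⟨0, by simp [hy]⟩
  have key := hTE.abs_det_submatrix_eq injective_id
    (linearIndependent_snocCol_rows hA _ injective_id) (Fin.castSucc_injective n)
    (injective_update_castSucc_last j)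
    (by rwa [snocCol_submatrix_castSucc])
    (by rw [snocCol_submatrix_update_castSucc, det_updateCol_mulVec]; exact mul_ne_zero hA hy)
  rw [snocCol_submatrix_castSucc, snocCol_submatrix_update_castSucc, det_updateCol_mulVec,
    abs_mul, eq_comm, mul_eq_left₀ (abs_ne_zero.2 hA)] at key
  exact mem_range_signType_cast_of_abs_eq_one key

theorem TotallyEquimodular.eq_zero_or_eq_zero_of_snocCol_mulVec {m : ℕ}
    {A : Matrix (Fin (m + 1)) (Fin (m + 1)) ℚ}
    (hadj : ∀ i j, A.adjugate i j = 1 ∨ A.adjugate i j = -1) (hA : A.det ≠ 0)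
    {y : Fin (m + 1) → ℚ} (hTE : TotallyEquimodular (A.snocCol (A *ᵥ y)))
    {j₁ j₂ : Fin (m + 1)} (h : j₁ ≠ j₂) : y j₁ = 0 ∨ y j₂ = 0 := by
  by_contra! hy
  have hy₁ := eq_one_or_eq_neg_one_of_mem_range_signType_cast
    (hTE.mem_range_of_snocCol_mulVec hA j₁) hy.1
  have hy₂ := eq_one_or_eq_neg_one_of_mem_range_signType_cast
    (hTE.mem_range_of_snocCol_mulVec hA j₂) hy.2
  set W := A.updateCol j₁ (A *ᵥ y)
  set c := update Fin.castSucc j₁ (Fin.last (m + 1))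
  have hW : W.det ≠ 0 := by
    rw [det_updateCol_mulVec]
    exact mul_ne_zero hA hy.1
  have hcol : ∀ i, W.adjugate j₂ i = 0 := by
    intro i
    by_contra hne
    have hsub : ∀ j : Fin (m + 1), (A.snocCol (A *ᵥ y)).submatrix i.succAbove (c ∘ j.succAbove) =
        W.submatrix i.succAbove j.succAbove := fun j => by
      simp only [W, c, ← snocCol_submatrix_update_castSucc, submatrix_submatrix, id_comp]
    have hminor : ∀ j : Fin (m + 1),
        |(W.submatrix i.succAbove j.succAbove).det| = |W.adjugate j i| := fun j => by
      rw [adjugate_fin_succ_eq_det_submatrix, abs_mul, abs_neg_one_pow, one_mul]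
    have hW₁ : W.adjugate j₁ i = A.adjugate j₁ i := by
      rw [adjugate_fin_succ_eq_det_submatrix, adjugate_fin_succ_eq_det_submatrix,
        submatrix_updateCol_succAbove]
    have hinj : ∀ j : Fin (m + 1), Injective (c ∘ j.succAbove) :=
      fun j => (injective_update_castSucc_last j₁).comp Fin.succAbove_right_injective
    have key := hTE.abs_det_submatrix_eq Fin.succAbove_right_injective
      (linearIndependent_snocCol_rows hA _ Fin.succAbove_right_injective) (hinj j₁) (hinj j₂)
      (by
        rw [hsub, ← abs_ne_zero, hminor, hW₁, abs_ne_zero]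
        rcases hadj j₁ i with h' | h' <;> simp [h'])
      (by rw [hsub, ← abs_ne_zero, hminor, abs_ne_zero]; exact hne)
    rw [hsub, hsub, hminor, hminor, hW₁, adjugate_updateCol_mulVec_apply A y h] at key
    -- `key : |±1| = |±1 - ±1|`, which fails in every case
    rcases hadj j₁ i with h₁ | h₁ <;> rcases hadj j₂ i with h₂ | h₂ <;>
      rcases hy₁ with h₃ | h₃ <;> rcases hy₂ with h₄ | h₄ <;>
      rw [h₁, h₂, h₃, h₄] at key <;> norm_num at key
  apply hW
  have := congr_fun (congr_fun (adjugate_mul W) j₂) j₂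
  simpa [mul_apply, hcol] using this.symm

theorem TotallyEquimodular.exists_eq_smul_col {m : ℕ}
    {A : Matrix (Fin (m + 1)) (Fin (m + 1)) ℚ} (hP : A.HasUnimodularProperMinors)
    (hdet : A.det ∉ Set.range SignType.cast) {x : Fin (m + 1) → ℚ}
    (hTE : TotallyEquimodular (A.snocCol x)) :
    ∃ j, ∃ ε ∈ Set.range SignType.cast, x = fun i => ε * A i j := by
  have hA : A.det ≠ 0 := fun h => hdet ⟨0, by simp [h]⟩
  obtain ⟨y, rfl⟩ : ∃ y, x = A *ᵥ y :=
    ⟨A⁻¹ *ᵥ x, by rw [mulVec_mulVec, mul_nonsing_inv _ hA.isUnit, one_mulVec]⟩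
  obtain ⟨j, hj⟩ : ∃ j, ∀ k ≠ j, y k = 0 := by
    by_cases h : ∃ j, y j ≠ 0
    · obtain ⟨j, hj⟩ := h
      exact ⟨j, fun k hk => (hTE.eq_zero_or_eq_zero_of_snocCol_mulVec
        (hP.adjugate_apply_eq_one_or_eq_neg_one hdet) hA hk).resolve_right hj⟩
    · simp only [not_exists, not_not] at h
      exact ⟨0, fun k _ => h k⟩
  refine ⟨j, y j, hTE.mem_range_of_snocCol_mulVec hA j, funext fun i => ?_⟩
  rw [mulVec, dotProduct, Finset.sum_eq_single j (fun k _ hk => by simp [hj k hk]) (by simp),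
    mul_comm]

lemma MinNonTU.hasUnimodularProperMinors {n : ℕ} {A : Matrix (Fin n) (Fin n) ℚ}
    (hA : MinNonTU A) : A.HasUnimodularProperMinors := by
  intro k hk f g
  by_cases hf : Injective f
  · exact (isTotallyUnimodular_iff _).1
      (hA.2 k n ⟨f, hf⟩ (Embedding.refl _) (Or.inl hk)) k id g
  · obtain ⟨p, q, hpq, hne⟩ := not_injective_iff.1 hf
    refine ⟨0, ?_⟩
    rw [SignType.coe_zero, eq_comm]
    exact det_zero_of_row_eq hne (by ext; simp [hpq])

lemma MinNonTU.det_notMem_range {n : ℕ} {A : Matrix (Fin n) (Fin n) ℚ} (hA : MinNonTU A) :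
    A.det ∉ Set.range SignType.cast := by
  intro hdet
  refine hA.1 fun k f g hf hg => ?_
  rcases (show k ≤ n by simpa using Fintype.card_le_of_injective f hf).lt_or_eq with hk | rfl
  · exact hA.hasUnimodularProperMinors k hk f g
  · exact (det_submatrix_perm_mem_range_iff A (Equiv.ofBijective f hf.bijective_of_finite)
      (Equiv.ofBijective g hg.bijective_of_finite)).2 hdet

lemma MinNonTU.ne_zero {n : ℕ} {A : Matrix (Fin n) (Fin n) ℚ} (hA : MinNonTU A) : n ≠ 0 := by
  rintro rfl
  exact hA.1 (emptyRows_isTotallyUnimodular A)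

end Equimodular

lemma eq_zero_or_exists_eq_col_iff {R : Type*} [CommRing R] {m n : ℕ}
    (A : Matrix (Fin m) (Fin (n + 1)) R) (x : Fin m → R) :
    (x = 0 ∨ ∃ j, (∀ i, x i = A i j) ∨ ∀ i, x i = -A i j) ↔
      ∃ j, ∃ ε ∈ Set.range SignType.cast, x = fun i => ε * A i j := by
  constructor
  · rintro (rfl | ⟨j, h | h⟩)
    · exact ⟨0, 0, ⟨0, rfl⟩, by ext; simp⟩
    · exact ⟨j, 1, ⟨1, rfl⟩, by ext i; simp [h]⟩
    · exact ⟨j, -1, ⟨-1, rfl⟩, by ext i; simp [h]⟩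
  · rintro ⟨j, _, ⟨s, rfl⟩, rfl⟩
    cases s
    · exact Or.inl (funext fun _ => by simp)
    · exact Or.inr ⟨j, Or.inr fun i => by simp⟩
    · exact Or.inr ⟨j, Or.inl fun i => by simp⟩

theorem stmt8_general {n : ℕ} (A : Matrix (Fin n) (Fin n) ℚ)
    (hA : MinNonTU A)
    (x : Fin n → ℚ) :
    TotallyEquimodular (Matrix.of fun i => Fin.snoc (A i) (x i)) ↔
      (x = 0 ∨ ∃ j : Fin n, (∀ i, x i = A i j) ∨ (∀ i, x i = -A i j)) := by
  obtain ⟨m, rfl⟩ := Nat.exists_eq_succ_of_ne_zero hA.ne_zero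
  rw [eq_zero_or_exists_eq_col_iff]
  constructor
  · exact TotallyEquimodular.exists_eq_smul_col hA.hasUnimodularProperMinors hA.det_notMem_range
  · rintro ⟨j, ε, hε, rfl⟩
    exact totallyEquimodular_snocCol_smul_col hA.hasUnimodularProperMinors j hε

theorem stmt8 {n : ℕ} (A : Matrix (Fin n) (Fin n) ℚ)
    (h01 : ∀ i j, A i j = 0 ∨ A i j = 1 ∨ A i j = -1) (hA : MinNonTU A)
    (x : Fin n → ℚ) :
    TotallyEquimodular (Matrix.of fun i => Fin.snoc (A i) (x i)) ↔
      (x = 0 ∨ ∃ j : Fin n, (∀ i, x i = A i j) ∨ (∀ i, x i = -A i j)) :=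
  stmt8_general A hA x
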